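/- Let β > 0, ν > 0 and ε > 0, and define the space 𝒲_ε = { x = (x_n)_{n≥1} : ‖x‖_{𝒲_ε} := sup_{n≥1} (λ_n^{β-2+ε} |x_n|) < ∞ }. For every initial condition x ∈ 𝒲_ε there exist T > 0 and a weak solution X of the viscous dyadic model on [0,T] with initial condition x such that sup_{t∈[0,T]} ‖X(t)‖_{𝒲_ε} < ∞, and X is the unique weak solution on [0,T] with initial condition x satisfying this bound. -/

import Mathlib

/-- The dyadic frequencies: `λ_0 = 0`, `λ_n = 2^n` for `n ≥ 1`. -/
noncomputable def lam (n : ℕ) : ℝ := if n = 0 then 0 else 2 ^ n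

/-- `X` is a weak solution of the viscous dyadic model with parameter `β` and
viscosity `ν` on the interval `I`. -/
def IsViscousSolution (β ν : ℝ) (I : Set ℝ) (X : ℕ → ℝ → ℝ) : Prop :=
  ∀ n, 1 ≤ n → ∀ t ∈ I, HasDerivWithinAt (X n)
    (-ν * lam n ^ 2 * X n t + lam (n - 1) ^ β * (X (n - 1) t) ^ 2
      - lam n ^ β * X n t * X (n + 1) t) I t

/-!
Write the system in Duhamel form
`X_n(t) = e^{-νλ_n² t} x_n + ∫₀ᵗ e^{-νλ_n² (t-s)} B_n(X(s)) ds`, where `B_n` is the quadratic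
nonlinearity. In the weighted sup-norm `sup_n λ_n^γ |X_n|`, with `γ = β - 2 + ε`, the nonlinearity
loses a factor `λ_n^{β-γ} = λ_n^{2-ε}`, while the Duhamel integral over a time `δ` gains a factor
`min(δ, 1/(νλ_n²))`. Since `ε > 0`, the product is small uniformly in `n` once `δ` is small, so the
Duhamel map halves distances on a ball over short time intervals. Picard iteration then yields a
solution; two bounded solutions agreeing up to time `t₀` have, on `[t₀, t₀ + δ]`, a distance at most
half of itself, so they agree on successive intervals of length `δ`.
-/

open Set Filter Topology MeasureTheory Real

noncomputable section

lemma lam_of_one_le {n : ℕ} (hn : 1 ≤ n) : lam n = 2 ^ n := if_neg (by omega)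

lemma lam_pos {n : ℕ} (hn : 1 ≤ n) : 0 < lam n := by
  rw [lam_of_one_le hn]; positivity

lemma one_le_lam {n : ℕ} (hn : 1 ≤ n) : 1 ≤ lam n := by
  rw [lam_of_one_le hn]; exact one_le_pow₀ one_le_two

lemma lam_nonneg (n : ℕ) : 0 ≤ lam n := by
  unfold lam; split_ifs <;> positivity

lemma lam_zero_rpow {β : ℝ} (hβ : β ≠ 0) : lam 0 ^ β = 0 := by
  simp [lam, zero_rpow hβ]

lemma lam_rpow {n : ℕ} (hn : 1 ≤ n) (y : ℝ) : lam n ^ y = 2 ^ (n * y) := by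
  rw [lam_of_one_le hn, rpow_natCast_mul zero_le_two]

lemma lam_rpow_mul_lam_pred_rpow {n : ℕ} (hn : 2 ≤ n) (β γ : ℝ) :
    lam n ^ γ * lam (n - 1) ^ β * lam (n - 1) ^ (-γ) * lam (n - 1) ^ (-γ) =
      2 ^ (2 * γ - β) * lam n ^ (β - γ) := by
  have hcast : ((n - 1 : ℕ) : ℝ) = n - 1 := by rw [Nat.cast_sub (by omega)]; norm_num
  simp only [lam_rpow (by omega : 1 ≤ n), lam_rpow (by omega : 1 ≤ n - 1), hcast,
    ← rpow_add two_pos]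
  congr 1; ring

lemma lam_rpow_mul_lam_succ_rpow {n : ℕ} (hn : 1 ≤ n) (β γ : ℝ) :
    lam n ^ γ * lam n ^ β * lam n ^ (-γ) * lam (n + 1) ^ (-γ) = 2 ^ (-γ) * lam n ^ (β - γ) := by
  simp only [lam_rpow hn, lam_rpow (by omega : 1 ≤ n + 1), Nat.cast_succ, ← rpow_add two_pos]
  congr 1; ring

-- The norm of `𝒲_ε` is the weighted sup-norm with weight exponent `γ = β - 2 + ε`.
def wBall (γ R : ℝ) : Set (ℕ → ℝ) := {u | ∀ n, 1 ≤ n → lam n ^ γ * |u n| ≤ R}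

section wBall

variable {γ R R' : ℝ} {u v : ℕ → ℝ}

lemma nonneg_of_mem_wBall (hu : u ∈ wBall γ R) : 0 ≤ R :=
  (mul_nonneg (rpow_nonneg (lam_nonneg 1) _) (abs_nonneg _)).trans (hu 1 le_rfl)

lemma zero_mem_wBall (hR : 0 ≤ R) : (fun _ => 0) ∈ wBall γ R := fun n _ => by
  rw [abs_zero, mul_zero]; exact hR

lemma wBall_mono (h : R ≤ R') : wBall γ R ⊆ wBall γ R' := fun _ hu n hn => (hu n hn).trans h

lemma mem_wBall_of_eq (hv : v ∈ wBall γ R) (h : ∀ n, 1 ≤ n → u n = v n) : u ∈ wBall γ R :=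
  fun n hn => h n hn ▸ hv n hn

lemma sub_mem_wBall (hu : u ∈ wBall γ R) (hv : v ∈ wBall γ R') : u - v ∈ wBall γ (R + R') :=
  fun n hn => by
    calc lam n ^ γ * |u n - v n| ≤ lam n ^ γ * |u n| + lam n ^ γ * |v n| := by
          rw [← mul_add]
          exact mul_le_mul_of_nonneg_left (abs_sub _ _) (rpow_nonneg (lam_nonneg n) γ)
      _ ≤ R + R' := add_le_add (hu n hn) (hv n hn)

lemma abs_le_of_mem_wBall (hu : u ∈ wBall γ R) {n : ℕ} (hn : 1 ≤ n) :
    |u n| ≤ R * lam n ^ (-γ) := by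
  rw [rpow_neg (lam_nonneg n), ← div_eq_mul_inv, le_div_iff₀ (rpow_pos_of_pos (lam_pos hn) _),
    mul_comm]
  exact hu n hn

end wBall

def dyadicNonlin (β : ℝ) (u : ℕ → ℝ) (n : ℕ) : ℝ :=
  lam (n - 1) ^ β * u (n - 1) ^ 2 - lam n ^ β * u n * u (n + 1)

section dyadicNonlin

variable {β : ℝ} {n : ℕ}

lemma dyadicNonlin_zero : dyadicNonlin β (fun _ => 0) n = 0 := by simp [dyadicNonlin]

-- At `n = 1` the first term carries `lam 0 ^ β = 0`, so the mode `u 0` never matters.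
lemma dyadicNonlin_congr (hβ : β ≠ 0) {u v : ℕ → ℝ} (h : ∀ m, 1 ≤ m → u m = v m) (hn : 1 ≤ n) :
    dyadicNonlin β u n = dyadicNonlin β v n := by
  obtain rfl | hn2 := eq_or_lt_of_le hn
  · simp [dyadicNonlin, lam_zero_rpow hβ, h 1 le_rfl, h 2 one_le_two]
  · simp only [dyadicNonlin, h (n - 1) (by omega), h n hn, h (n + 1) (by omega)]

lemma tendsto_dyadicNonlin (hβ : β ≠ 0) {ι : Type*} {l : Filter ι} {u : ι → ℕ → ℝ}
    {v : ℕ → ℝ} (h : ∀ m, 1 ≤ m → Tendsto (fun i => u i m) l (𝓝 (v m))) (hn : 1 ≤ n) :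
    Tendsto (fun i => dyadicNonlin β (u i) n) l (𝓝 (dyadicNonlin β v n)) := by
  obtain rfl | hn2 := eq_or_lt_of_le hn
  · simpa [dyadicNonlin, lam_zero_rpow hβ] using ((h 1 le_rfl).const_mul _).mul (h 2 one_le_two)
  · exact (((h (n - 1) (by omega)).pow 2).const_mul _).sub
      (((h n hn).const_mul _).mul (h (n + 1) (by omega)))

lemma continuousOn_dyadicNonlin (hβ : β ≠ 0) {X : ℕ → ℝ → ℝ} {S : Set ℝ}
    (hX : ∀ m, 1 ≤ m → ContinuousOn (X m) S) (hn : 1 ≤ n) :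
    ContinuousOn (fun t => dyadicNonlin β (X · t) n) S :=
  fun t ht => tendsto_dyadicNonlin hβ (fun m hm => hX m hm t ht) hn

lemma continuous_dyadicNonlin {X : ℕ → ℝ → ℝ} (hX : ∀ m, Continuous (X m)) (n : ℕ) :
    Continuous (fun t => dyadicNonlin β (X · t) n) := by
  unfold dyadicNonlin; fun_prop

lemma abs_dyadicNonlin_sub_le (u v : ℕ → ℝ) (n : ℕ) :
    |dyadicNonlin β u n - dyadicNonlin β v n| ≤
      lam (n - 1) ^ β * ((|u (n - 1)| + |v (n - 1)|) * |u (n - 1) - v (n - 1)|)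
        + lam n ^ β * (|u n| * |u (n + 1) - v (n + 1)| + |v (n + 1)| * |u n - v n|) := by
  have h₁ := rpow_nonneg (lam_nonneg (n - 1)) β
  have h₂ := rpow_nonneg (lam_nonneg n) β
  calc |dyadicNonlin β u n - dyadicNonlin β v n|
      = |lam (n - 1) ^ β * ((u (n - 1) + v (n - 1)) * (u (n - 1) - v (n - 1)))
          - lam n ^ β * (u n * (u (n + 1) - v (n + 1)) + v (n + 1) * (u n - v n))| := by
        unfold dyadicNonlin; ring_nf
    _ ≤ _ := by
        refine (abs_sub _ _).trans ?_
        simp only [abs_mul, abs_of_nonneg h₁, abs_of_nonneg h₂]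
        gcongr
        · exact abs_add_le _ _
        · exact (abs_add_le _ _).trans_eq (by rw [abs_mul, abs_mul])

def nonlinConst (β γ : ℝ) : ℝ := 2 * ((2 : ℝ) ^ (2 * γ - β) + 2 ^ (-γ))

lemma lam_rpow_mul_abs_dyadicNonlin_sub_le (hβ : 0 < β) {γ R D : ℝ} {u v : ℕ → ℝ}
    (hu : u ∈ wBall γ R) (hv : v ∈ wBall γ R) (huv : u - v ∈ wBall γ D) (hn : 1 ≤ n) :
    lam n ^ γ * |dyadicNonlin β u n - dyadicNonlin β v n| ≤
      nonlinConst β γ * R * D * lam n ^ (β - γ) := by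
  have hR := nonneg_of_mem_wBall hu
  have hD := nonneg_of_mem_wBall huv
  have hw : 0 ≤ lam n ^ γ := rpow_nonneg (lam_nonneg n) γ
  have hu' := fun {m} (hm : 1 ≤ m) => abs_le_of_mem_wBall hu hm
  have hv' := fun {m} (hm : 1 ≤ m) => abs_le_of_mem_wBall hv hm
  have huv' := fun {m} (hm : 1 ≤ m) => abs_le_of_mem_wBall huv hm
  have := lam_nonneg (n - 1); have := lam_nonneg n; have := lam_nonneg (n + 1)
  have low : lam n ^ γ * (lam (n - 1) ^ β *
      ((|u (n - 1)| + |v (n - 1)|) * |u (n - 1) - v (n - 1)|)) ≤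
      2 * R * D * 2 ^ (2 * γ - β) * lam n ^ (β - γ) := by
    obtain rfl | hn2 := eq_or_lt_of_le hn
    · rw [Nat.sub_self, lam_zero_rpow hβ.ne', zero_mul, mul_zero]
      positivity
    have hm : 1 ≤ n - 1 := by omega
    calc _ ≤ lam n ^ γ * (lam (n - 1) ^ β *
          ((R * lam (n - 1) ^ (-γ) + R * lam (n - 1) ^ (-γ)) * (D * lam (n - 1) ^ (-γ)))) := by
          gcongr
          exacts [hu' hm, hv' hm, huv' hm]
      _ = 2 * R * D * (lam n ^ γ * lam (n - 1) ^ β * lam (n - 1) ^ (-γ) * lam (n - 1) ^ (-γ)) := by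
          ring
      _ = 2 * R * D * 2 ^ (2 * γ - β) * lam n ^ (β - γ) := by
          rw [lam_rpow_mul_lam_pred_rpow hn2]; ring
  have high : lam n ^ γ * (lam n ^ β *
      (|u n| * |u (n + 1) - v (n + 1)| + |v (n + 1)| * |u n - v n|)) ≤
      2 * R * D * 2 ^ (-γ) * lam n ^ (β - γ) := by
    calc _ ≤ lam n ^ γ * (lam n ^ β * (R * lam n ^ (-γ) * (D * lam (n + 1) ^ (-γ))
          + R * lam (n + 1) ^ (-γ) * (D * lam n ^ (-γ)))) := by
          gcongr
          exacts [hu' hn, huv' (by omega), hv' (by omega), huv' hn]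
      _ = 2 * R * D * (lam n ^ γ * lam n ^ β * lam n ^ (-γ) * lam (n + 1) ^ (-γ)) := by
          ring
      _ = 2 * R * D * 2 ^ (-γ) * lam n ^ (β - γ) := by
          rw [lam_rpow_mul_lam_succ_rpow hn]; ring
  calc lam n ^ γ * |dyadicNonlin β u n - dyadicNonlin β v n|
      ≤ lam n ^ γ * (lam (n - 1) ^ β * ((|u (n - 1)| + |v (n - 1)|) * |u (n - 1) - v (n - 1)|)
        + lam n ^ β * (|u n| * |u (n + 1) - v (n + 1)| + |v (n + 1)| * |u n - v n|)) :=
        mul_le_mul_of_nonneg_left (abs_dyadicNonlin_sub_le u v n) hw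
    _ ≤ 2 * R * D * 2 ^ (2 * γ - β) * lam n ^ (β - γ) + 2 * R * D * 2 ^ (-γ) * lam n ^ (β - γ) := by
        rw [mul_add]; exact add_le_add low high
    _ = nonlinConst β γ * R * D * lam n ^ (β - γ) := by unfold nonlinConst; ring

end dyadicNonlin

def duhamel (a c : ℝ) (g : ℝ → ℝ) (t : ℝ) : ℝ :=
  exp (-(a * t)) * (c + ∫ s in (0)..t, exp (a * s) * g s)

section duhamel

variable {a c t : ℝ} {g h : ℝ → ℝ}

lemma duhamel_apply_zero : duhamel a c g 0 = c := by simp [duhamel]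

lemma IntervalIntegrable.exp_mul (hg : IntervalIntegrable g volume 0 t) :
    IntervalIntegrable (fun s => exp (a * s) * g s) volume 0 t :=
  hg.continuousOn_mul (by fun_prop)

lemma duhamel_sub (hg : IntervalIntegrable g volume 0 t) (hh : IntervalIntegrable h volume 0 t) :
    duhamel a c g t - duhamel a c h t = duhamel a 0 (fun s => g s - h s) t := by
  simp only [duhamel, mul_sub, intervalIntegral.integral_sub hg.exp_mul hh.exp_mul]
  ring

lemma one_sub_exp_neg_div_le_min (ha : 0 < a) (s : ℝ) :
    (1 - exp (-(a * s))) / a ≤ min s (1 / a) := by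
  rw [le_min_iff, div_le_iff₀ ha, div_le_div_iff_of_pos_right ha]
  constructor
  · linarith [add_one_le_exp (-(a * s))]
  · linarith [exp_pos (-(a * s))]

lemma integral_eq_integral_of_eq_zero_on_Ioo {f : ℝ → ℝ} {t₀ : ℝ} (ht₀ : 0 ≤ t₀) (ht : t₀ ≤ t)
    (hf : IntervalIntegrable f volume 0 t) (hzero : ∀ s ∈ Ioo 0 t₀, f s = 0) :
    ∫ s in (0)..t, f s = ∫ s in t₀..t, f s := by
  have hnull : ∫ s in (0)..t₀, f s = 0 := by
    rw [intervalIntegral.integral_of_le ht₀, integral_Ioc_eq_integral_Ioo]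
    exact setIntegral_eq_zero_of_forall_eq_zero hzero
  have ht₀' : t₀ ∈ uIcc 0 t := by rw [uIcc_of_le (ht₀.trans ht)]; exact ⟨ht₀, ht⟩
  rw [← intervalIntegral.integral_add_adjacent_intervals
    (hf.mono_set (uIcc_subset_uIcc_left ht₀')) (hf.mono_set (uIcc_subset_uIcc_right ht₀')),
    hnull, zero_add]

lemma abs_duhamel_le (ha : 0 < a) {t₀ M : ℝ} (ht₀ : 0 ≤ t₀) (ht : t₀ ≤ t)
    (hg : IntervalIntegrable g volume 0 t) (hzero : ∀ s ∈ Ioo 0 t₀, g s = 0)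
    (hM : ∀ s ∈ Icc t₀ t, |g s| ≤ M) :
    |duhamel a 0 g t| ≤ M * min (t - t₀) (1 / a) := by
  have hM₀ : 0 ≤ M := (abs_nonneg _).trans (hM t₀ ⟨le_rfl, ht⟩)
  have hsplit := integral_eq_integral_of_eq_zero_on_Ioo ht₀ ht (hg.exp_mul (a := a))
    fun s hs => by rw [hzero s hs, mul_zero]
  have hJ : |∫ s in t₀..t, exp (a * s) * g s| ≤ M * ((exp (a * t) - exp (a * t₀)) / a) := by
    calc |∫ s in t₀..t, exp (a * s) * g s| ≤ ∫ s in t₀..t, exp (a * s) * M := by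
          rw [← norm_eq_abs]
          refine intervalIntegral.norm_integral_le_of_norm_le ht (ae_of_all _ fun s hs => ?_)
            ((by fun_prop : Continuous fun s => exp (a * s) * M).intervalIntegrable
              (μ := volume) _ _)
          rw [norm_mul, norm_of_nonneg (exp_pos _).le]
          exact mul_le_mul_of_nonneg_left (hM s (Ioc_subset_Icc_self hs)) (exp_pos _).le
      _ = M * ((exp (a * t) - exp (a * t₀)) / a) := by
          rw [intervalIntegral.integral_mul_const,
            intervalIntegral.integral_comp_mul_left exp ha.ne', integral_exp, smul_eq_mul]
          field_simp
  have hexp : exp (-(a * t)) * ((exp (a * t) - exp (a * t₀)) / a) =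
      (1 - exp (-(a * (t - t₀)))) / a := by
    rw [mul_div_assoc', mul_sub, ← exp_add, ← exp_add]
    congr 2 <;> ring_nf
    simp
  calc |duhamel a 0 g t| = exp (-(a * t)) * |∫ s in t₀..t, exp (a * s) * g s| := by
        rw [duhamel, zero_add, hsplit, abs_mul, abs_of_pos (exp_pos _)]
    _ ≤ exp (-(a * t)) * (M * ((exp (a * t) - exp (a * t₀)) / a)) :=
        mul_le_mul_of_nonneg_left hJ (exp_pos _).le
    _ = M * ((1 - exp (-(a * (t - t₀)))) / a) := by rw [mul_left_comm, hexp]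
    _ ≤ M * min (t - t₀) (1 / a) :=
        mul_le_mul_of_nonneg_left (one_sub_exp_neg_div_le_min ha (t - t₀)) hM₀

lemma continuous_duhamel (hg : Continuous g) : Continuous (duhamel a c g) := by
  have hprim := intervalIntegral.continuous_primitive
    (fun u v => (by fun_prop : Continuous fun s => exp (a * s) * g s).intervalIntegrable
      (μ := volume) u v) 0
  exact (by fun_prop : Continuous fun t => exp (-(a * t))).mul (continuous_const.add hprim)

lemma hasDerivWithinAt_duhamel {T : ℝ} (hg : ContinuousOn g (Icc 0 T)) (ht : t ∈ Icc 0 T) :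
    HasDerivWithinAt (duhamel a c g) (-a * duhamel a c g t + g t) (Icc 0 T) t := by
  have : Fact (t ∈ Icc 0 T) := ⟨ht⟩
  have hcont : ContinuousOn (fun s => exp (a * s) * g s) (Icc 0 T) :=
    (by fun_prop : Continuous fun s => exp (a * s)).continuousOn.mul hg
  have hprim : HasDerivWithinAt (fun u => ∫ s in (0)..u, exp (a * s) * g s)
      (exp (a * t) * g t) (Icc 0 T) t :=
    intervalIntegral.integral_hasDerivWithinAt_right
      ((hcont.mono (Icc_subset_Icc_right ht.2)).intervalIntegrable_of_Icc ht.1)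
      ⟨Icc 0 T, self_mem_nhdsWithin, hcont.aestronglyMeasurable measurableSet_Icc⟩ (hcont t ht)
  have hexp : HasDerivAt (fun u => exp (-(a * u))) (-a * exp (-(a * t))) t := by
    simpa [mul_comm] using ((hasDerivAt_id t).const_mul a).neg.exp
  refine (hexp.hasDerivWithinAt.mul ((hasDerivWithinAt_const t _ c).add hprim)).congr_deriv ?_
  have : exp (-(a * t)) * exp (a * t) = 1 := by rw [← exp_add]; simp
  simp only [duhamel, Pi.add_apply]
  linear_combination g t * this

lemma eq_duhamel_of_hasDerivWithinAt {T : ℝ} {y : ℝ → ℝ}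
    (hy : ∀ s ∈ Icc 0 T, HasDerivWithinAt y (-a * y s + g s) (Icc 0 T) s)
    (hg : ContinuousOn g (Icc 0 T)) (ht : t ∈ Icc 0 T) :
    y t = duhamel a (y 0) g t := by
  have hsub : Icc 0 t ⊆ Icc 0 T := Icc_subset_Icc_right ht.2
  have hderiv : ∀ s ∈ Ioo 0 t, HasDerivAt (fun u => exp (a * u) * y u) (exp (a * s) * g s) s := by
    intro s hs
    have hy' := (hy s (Ioo_subset_Icc_self.trans hsub hs)).hasDerivAt
      (Icc_mem_nhds hs.1 (hs.2.trans_le ht.2))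
    have hexp : HasDerivAt (fun u => exp (a * u)) (a * exp (a * s)) s := by
      simpa [mul_comm] using ((hasDerivAt_id s).const_mul a).exp
    exact (hexp.mul hy').congr_deriv (by ring)
  have hcont : ContinuousOn (fun u => exp (a * u) * y u) (Icc 0 t) :=
    (by fun_prop : Continuous fun u => exp (a * u)).continuousOn.mul
      fun s hs => (hy s (hsub hs)).continuousWithinAt.mono hsub
  have hFTC := intervalIntegral.integral_eq_sub_of_hasDerivAt_of_le ht.1 hcont hderiv
    (((by fun_prop : Continuous fun s => exp (a * s)).continuousOn.mul
      (hg.mono hsub)).intervalIntegrable_of_Icc ht.1)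
  have : exp (-(a * t)) * exp (a * t) = 1 := by rw [← exp_add]; simp
  rw [duhamel, hFTC, mul_zero, exp_zero, one_mul]
  linear_combination -y t * this

lemma tendsto_duhamel {g' : ℕ → ℝ → ℝ} {M : ℝ} (ht : 0 ≤ t)
    (hcont : ∀ k, ContinuousOn (g' k) (Icc 0 t)) (hM : ∀ k, ∀ s ∈ Icc 0 t, |g' k s| ≤ M)
    (hlim : ∀ s ∈ Icc 0 t, Tendsto (fun k => g' k s) atTop (𝓝 (g s))) :
    Tendsto (fun k => duhamel a c (g' k) t) atTop (𝓝 (duhamel a c g t)) := by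
  have hIoc : ∀ s ∈ uIoc 0 t, s ∈ Icc 0 t := fun s hs => by
    rw [uIoc_of_le ht] at hs; exact Ioc_subset_Icc_self hs
  refine tendsto_const_nhds.mul (tendsto_const_nhds.add ?_)
  refine intervalIntegral.tendsto_integral_filter_of_dominated_convergence
    (fun s => exp (a * s) * M) (Eventually.of_forall fun k => ?_)
    (Eventually.of_forall fun k => ae_of_all _ fun s hs => ?_)
    ((by fun_prop : Continuous fun s => exp (a * s) * M).intervalIntegrable _ _)
    (ae_of_all _ fun s hs => (hlim s (hIoc s hs)).const_mul _)
  · rw [uIoc_of_le ht]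
    exact ((by fun_prop : Continuous fun s => exp (a * s)).continuousOn.mul
      ((hcont k).mono Ioc_subset_Icc_self)).aestronglyMeasurable measurableSet_Ioc
  · rw [norm_mul, norm_of_nonneg (exp_pos _).le]
    exact mul_le_mul_of_nonneg_left (hM k s (hIoc s hs)) (exp_pos _).le

end duhamel

/-- `min δ (1 / (ν λ_n²))` bounds `∫₀^δ e^{-νλ_n² s} ds`, the damping of mode `n` by the Duhamel
integral over a time `δ`, and `λ_n^θ` is the loss of derivatives in the nonlinearity. -/
def SmoothingGainLE (ν θ δ η : ℝ) : Prop :=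
  ∀ n, 1 ≤ n → lam n ^ θ * min δ (1 / (ν * lam n ^ 2)) ≤ η

lemma SmoothingGainLE.mono {ν θ δ δ' η : ℝ} (h : SmoothingGainLE ν θ δ η) (hδ : δ' ≤ δ) :
    SmoothingGainLE ν θ δ' η := fun n hn =>
  (mul_le_mul_of_nonneg_left (min_le_min_right _ hδ) (rpow_nonneg (lam_nonneg n) θ)).trans
    (h n hn)

lemma exists_smoothingGainLE {ν θ η : ℝ} (hν : 0 < ν) (hθ : θ < 2) (hη : 0 < η) :
    ∃ δ > 0, SmoothingGainLE ν θ δ η := by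
  set r : ℝ := 2 ^ (θ - 2)
  have hr : r < 1 := rpow_lt_one_of_one_lt_of_neg one_lt_two (by linarith)
  obtain ⟨N, hN⟩ := exists_pow_lt_of_lt_one (mul_pos hν hη) hr
  refine ⟨η / 4 ^ N, by positivity, fun n hn => ?_⟩
  have hlam := lam_pos hn
  -- Modes `n ≤ N` are controlled by `δ`, the others by `1 / (ν λ_n²)`, which beats `λ_n^θ`.
  rcases le_or_gt n N with hnN | hNn
  · have h4 : lam n ^ (2 : ℝ) = 4 ^ n := by
      rw [rpow_two, lam_of_one_le hn, ← pow_mul, mul_comm, pow_mul]; norm_num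
    calc lam n ^ θ * min (η / 4 ^ N) (1 / (ν * lam n ^ 2))
        ≤ lam n ^ (2 : ℝ) * (η / 4 ^ N) := by
          gcongr
          exacts [one_le_lam hn, min_le_left _ _]
      _ ≤ 4 ^ N * (η / 4 ^ N) := by
          rw [h4]; gcongr; norm_num
      _ = η := by field_simp
  · have hrn : lam n ^ θ / lam n ^ 2 = r ^ n := by
      rw [← rpow_natCast (lam n) 2, ← rpow_sub hlam, lam_rpow hn, mul_comm,
        rpow_mul_natCast zero_le_two, Nat.cast_ofNat]
    calc lam n ^ θ * min (η / 4 ^ N) (1 / (ν * lam n ^ 2))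
        ≤ lam n ^ θ * (1 / (ν * lam n ^ 2)) :=
          mul_le_mul_of_nonneg_left (min_le_right _ _) (rpow_nonneg hlam.le θ)
      _ = r ^ n / ν := by rw [← hrn]; field_simp
      _ ≤ r ^ N / ν :=
          div_le_div_of_nonneg_right (pow_le_pow_of_le_one (by positivity) hr.le hNn.le) hν.le
      _ ≤ η := by rw [div_le_iff₀ hν]; linarith

def picardMap (β ν : ℝ) (x : ℕ → ℝ) (X : ℕ → ℝ → ℝ) (n : ℕ) : ℝ → ℝ :=
  duhamel (ν * lam n ^ 2) (x n) (fun s => dyadicNonlin β (X · s) n)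

def IsMildSolution (β ν : ℝ) (x : ℕ → ℝ) (T : ℝ) (X : ℕ → ℝ → ℝ) : Prop :=
  (∀ n, 1 ≤ n → ContinuousOn (X n) (Icc 0 T)) ∧
    ∀ n, 1 ≤ n → EqOn (picardMap β ν x X n) (X n) (Icc 0 T)

section picardMap

variable {β ν γ R D δ η t₀ t : ℝ} {x : ℕ → ℝ} {X Y : ℕ → ℝ → ℝ} {n : ℕ}

lemma picardMap_zero : picardMap β ν x 0 n t = exp (-(ν * lam n ^ 2 * t)) * x n := by
  simp [picardMap, duhamel, dyadicNonlin_zero]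

lemma continuous_picardMap (hX : ∀ m, Continuous (X m)) (n : ℕ) :
    Continuous (picardMap β ν x X n) :=
  continuous_duhamel (continuous_dyadicNonlin hX n)

lemma lam_rpow_mul_abs_picardMap_sub_le (hβ : 0 < β) (hν : 0 < ν)
    (hgain : SmoothingGainLE ν (β - γ) δ η) (ht₀ : 0 ≤ t₀) (ht : t₀ ≤ t) (htδ : t ≤ t₀ + δ)
    (hX : ∀ m, 1 ≤ m → ContinuousOn (X m) (Icc 0 t))
    (hY : ∀ m, 1 ≤ m → ContinuousOn (Y m) (Icc 0 t))
    (hXR : ∀ s ∈ Icc 0 t, (X · s) ∈ wBall γ R) (hYR : ∀ s ∈ Icc 0 t, (Y · s) ∈ wBall γ R)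
    (hXY : ∀ s ∈ Icc t₀ t, (X · s) - (Y · s) ∈ wBall γ D)
    (heq : ∀ s ∈ Ioo 0 t₀, ∀ m, 1 ≤ m → X m s = Y m s) (hn : 1 ≤ n) :
    lam n ^ γ * |picardMap β ν x X n t - picardMap β ν x Y n t| ≤
      nonlinConst β γ * R * D * η := by
  have hw := rpow_pos_of_pos (lam_pos hn) γ
  have hint : ∀ {Z : ℕ → ℝ → ℝ}, (∀ m, 1 ≤ m → ContinuousOn (Z m) (Icc 0 t)) →
      IntervalIntegrable (fun s => dyadicNonlin β (Z · s) n) volume 0 t := fun hZ =>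
    (continuousOn_dyadicNonlin hβ.ne' hZ hn).intervalIntegrable_of_Icc (ht₀.trans ht)
  set M := nonlinConst β γ * R * D * lam n ^ (β - γ) / lam n ^ γ
  have hM : ∀ s ∈ Icc t₀ t, |dyadicNonlin β (X · s) n - dyadicNonlin β (Y · s) n| ≤ M :=
    fun s hs => by
      have hs' : s ∈ Icc 0 t := ⟨ht₀.trans hs.1, hs.2⟩
      rw [le_div_iff₀ hw, mul_comm]
      exact lam_rpow_mul_abs_dyadicNonlin_sub_le hβ (hXR s hs') (hYR s hs') (hXY s hs) hn
  have hzero : ∀ s ∈ Ioo 0 t₀, dyadicNonlin β (X · s) n - dyadicNonlin β (Y · s) n = 0 :=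
    fun s hs => sub_eq_zero.2 (dyadicNonlin_congr hβ.ne' (heq s hs) hn)
  have ha : 0 < ν * lam n ^ 2 := by have := lam_pos hn; positivity
  rw [picardMap, picardMap, duhamel_sub (hint hX) (hint hY)]
  calc lam n ^ γ * |duhamel (ν * lam n ^ 2) 0
        (fun s => dyadicNonlin β (X · s) n - dyadicNonlin β (Y · s) n) t|
      ≤ lam n ^ γ * (M * min (t - t₀) (1 / (ν * lam n ^ 2))) :=
        mul_le_mul_of_nonneg_left (abs_duhamel_le ha ht₀ ht ((hint hX).sub (hint hY)) hzero hM)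
          hw.le
    _ = nonlinConst β γ * R * D * (lam n ^ (β - γ) * min (t - t₀) (1 / (ν * lam n ^ 2))) := by
        simp only [M]; field_simp
    _ ≤ nonlinConst β γ * R * D * η := by
        have hR := nonneg_of_mem_wBall (hXR t ⟨ht₀.trans ht, le_rfl⟩)
        have hD := nonneg_of_mem_wBall (hXY t ⟨ht, le_rfl⟩)
        have hK : 0 < nonlinConst β γ := by unfold nonlinConst; positivity
        gcongr
        exact (hgain.mono (by linarith)) n hn

lemma abs_dyadicNonlin_le (hβ : 0 < β) {u : ℕ → ℝ} (hu : u ∈ wBall γ R) (hn : 1 ≤ n) :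
    |dyadicNonlin β u n| ≤ nonlinConst β γ * R * R * lam n ^ (β - γ) / lam n ^ γ := by
  have hR := nonneg_of_mem_wBall hu
  rw [le_div_iff₀ (rpow_pos_of_pos (lam_pos hn) γ), mul_comm]
  simpa [dyadicNonlin_zero] using lam_rpow_mul_abs_dyadicNonlin_sub_le hβ hu (zero_mem_wBall hR)
    (fun m hm => by simpa using hu m hm) hn

lemma picardMap_mem_wBall {C : ℝ} (hβ : 0 < β) (hν : 0 < ν)
    (hgain : SmoothingGainLE ν (β - γ) δ η) (ht : 0 ≤ t) (htδ : t ≤ δ) (hx : x ∈ wBall γ C)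
    (hX : ∀ m, 1 ≤ m → ContinuousOn (X m) (Icc 0 t)) (hXR : ∀ s ∈ Icc 0 t, (X · s) ∈ wBall γ R)
    (hCR : C + nonlinConst β γ * R * R * η ≤ R) :
    (picardMap β ν x X · t) ∈ wBall γ R := by
  intro n hn
  have hR := nonneg_of_mem_wBall (hXR t ⟨ht, le_rfl⟩)
  have hdiff := lam_rpow_mul_abs_picardMap_sub_le (x := x) (Y := 0) (t₀ := 0) (D := R) hβ hν
    hgain le_rfl ht (by linarith) hX (fun _ _ => continuousOn_const) hXR
    (fun _ _ => zero_mem_wBall hR) (fun s hs m hm => by simpa using hXR s hs m hm) (by simp) hn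
  have hdecay : exp (-(ν * lam n ^ 2 * t)) ≤ 1 := by
    have := lam_pos hn
    rw [exp_le_one_iff, neg_nonpos]; positivity
  have hw := rpow_nonneg (lam_nonneg n) γ
  calc lam n ^ γ * |picardMap β ν x X n t|
      = lam n ^ γ * |exp (-(ν * lam n ^ 2 * t)) * x n
          + (picardMap β ν x X n t - picardMap β ν x 0 n t)| := by
        rw [picardMap_zero, add_sub_cancel]
    _ ≤ lam n ^ γ * (exp (-(ν * lam n ^ 2 * t)) * |x n|
          + |picardMap β ν x X n t - picardMap β ν x 0 n t|) :=
        mul_le_mul_of_nonneg_left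
          ((abs_add_le _ _).trans_eq (by rw [abs_mul, abs_of_pos (exp_pos _)])) hw
    _ = exp (-(ν * lam n ^ 2 * t)) * (lam n ^ γ * |x n|)
          + lam n ^ γ * |picardMap β ν x X n t - picardMap β ν x 0 n t| := by ring
    _ ≤ 1 * C + nonlinConst β γ * R * R * η := by
        gcongr
        exact hx n hn
    _ ≤ R := by linarith

lemma picardMap_sub_mem_wBall (hβ : 0 < β) (hν : 0 < ν)
    (hgain : SmoothingGainLE ν (β - γ) δ η) (ht₀ : 0 ≤ t₀) (ht : t₀ ≤ t) (htδ : t ≤ t₀ + δ)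
    (hX : ∀ m, 1 ≤ m → ContinuousOn (X m) (Icc 0 t))
    (hY : ∀ m, 1 ≤ m → ContinuousOn (Y m) (Icc 0 t))
    (hXR : ∀ s ∈ Icc 0 t, (X · s) ∈ wBall γ R) (hYR : ∀ s ∈ Icc 0 t, (Y · s) ∈ wBall γ R)
    (hXY : ∀ s ∈ Icc t₀ t, (X · s) - (Y · s) ∈ wBall γ D)
    (heq : ∀ s ∈ Ioo 0 t₀, ∀ m, 1 ≤ m → X m s = Y m s)
    (hη : nonlinConst β γ * R * η ≤ 1 / 2) :
    (picardMap β ν x X · t) - (picardMap β ν x Y · t) ∈ wBall γ (D / 2) := fun n hn => by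
  have hD := nonneg_of_mem_wBall (hXY t ⟨ht, le_rfl⟩)
  calc _ ≤ nonlinConst β γ * R * D * η :=
        lam_rpow_mul_abs_picardMap_sub_le hβ hν hgain ht₀ ht htδ hX hY hXR hYR hXY heq hn
    _ = D * (nonlinConst β γ * R * η) := by ring
    _ ≤ D / 2 := by nlinarith

end picardMap

section iterate

variable {β ν γ C R T η : ℝ} {x : ℕ → ℝ}

lemma continuous_picardMap_iterate (k m : ℕ) : Continuous ((picardMap β ν x)^[k] 0 m) := by
  induction k generalizing m with
  | zero => exact continuous_const
  | succ k ih =>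
    rw [Function.iterate_succ_apply']
    exact continuous_picardMap ih m

lemma picardMap_iterate_mem_wBall (hβ : 0 < β) (hν : 0 < ν)
    (hgain : SmoothingGainLE ν (β - γ) T η) (hx : x ∈ wBall γ C) (hR : 0 ≤ R)
    (hCR : C + nonlinConst β γ * R * R * η ≤ R) (k : ℕ) :
    ∀ t ∈ Icc 0 T, ((picardMap β ν x)^[k] 0 · t) ∈ wBall γ R := by
  induction k with
  | zero => exact fun _ _ => zero_mem_wBall hR
  | succ k ih =>
    intro t ht
    rw [Function.iterate_succ_apply']
    exact picardMap_mem_wBall hβ hν hgain ht.1 ht.2 hx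
      (fun m _ => (continuous_picardMap_iterate k m).continuousOn)
      (fun s hs => ih s ⟨hs.1, hs.2.trans ht.2⟩) hCR

lemma picardMap_iterate_sub_mem_wBall (hβ : 0 < β) (hν : 0 < ν)
    (hgain : SmoothingGainLE ν (β - γ) T η) (hx : x ∈ wBall γ C) (hR : 0 ≤ R)
    (hCR : C + nonlinConst β γ * R * R * η ≤ R) (hη : nonlinConst β γ * R * η ≤ 1 / 2)
    (k : ℕ) :
    ∀ t ∈ Icc 0 T,
      ((picardMap β ν x)^[k + 1] 0 · t) - ((picardMap β ν x)^[k] 0 · t) ∈ wBall γ (R / 2 ^ k) := by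
  have hball := picardMap_iterate_mem_wBall hβ hν hgain hx hR hCR
  induction k with
  | zero => exact fun t ht n hn => by simpa using hball 1 t ht n hn
  | succ k ih =>
    intro t ht
    have hsub : ∀ {s}, s ∈ Icc 0 t → s ∈ Icc 0 T := fun hs => ⟨hs.1, hs.2.trans ht.2⟩
    have := picardMap_sub_mem_wBall (x := x) hβ hν hgain le_rfl ht.1 (by simpa using ht.2)
      (fun m _ => (continuous_picardMap_iterate (k + 1) m).continuousOn)
      (fun m _ => (continuous_picardMap_iterate k m).continuousOn)
      (fun s hs => hball _ s (hsub hs)) (fun s hs => hball _ s (hsub hs))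
      (fun s hs => ih s (hsub hs)) (by simp) hη
    rwa [← Function.iterate_succ_apply' (picardMap β ν x) (k + 1),
      ← Function.iterate_succ_apply' (picardMap β ν x) k, div_div,
      ← pow_succ] at this

end iterate

section limit

variable {γ R : ℝ} {S : Set ℝ} {F : ℕ → ℕ → ℝ → ℝ} {n : ℕ} {t : ℝ}

lemma dist_le_of_sub_mem_wBall
    (hF : ∀ k, ∀ t ∈ S, (F (k + 1) · t) - (F k · t) ∈ wBall γ (R / 2 ^ k)) (hn : 1 ≤ n)
    (ht : t ∈ S) (k : ℕ) :
    dist (F k n t) (F (k + 1) n t) ≤ R / lam n ^ γ * (1 / 2) ^ k := by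
  have hw := rpow_pos_of_pos (lam_pos hn) γ
  rw [dist_comm, dist_eq_norm, norm_eq_abs, div_mul_eq_mul_div, le_div_iff₀ hw, mul_comm,
    one_div_pow, ← div_eq_mul_one_div]
  exact hF k t ht n hn

lemma tendsto_limUnder_of_sub_mem_wBall
    (hF : ∀ k, ∀ t ∈ S, (F (k + 1) · t) - (F k · t) ∈ wBall γ (R / 2 ^ k)) (hn : 1 ≤ n)
    (ht : t ∈ S) :
    Tendsto (F · n t) atTop (𝓝 (limUnder atTop (F · n t))) :=
  (cauchySeq_of_le_geometric _ _ (by norm_num) (dist_le_of_sub_mem_wBall hF hn ht)).tendsto_limUnder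

lemma limUnder_mem_wBall (hF : ∀ k, ∀ t ∈ S, (F (k + 1) · t) - (F k · t) ∈ wBall γ (R / 2 ^ k))
    (hFR : ∀ k, (F k · t) ∈ wBall γ R) (ht : t ∈ S) :
    (fun n => limUnder atTop (F · n t)) ∈ wBall γ R := fun n hn =>
  le_of_tendsto' ((tendsto_limUnder_of_sub_mem_wBall hF hn ht).abs.const_mul (lam n ^ γ))
    fun k => hFR k n hn

lemma continuousOn_limUnder_of_sub_mem_wBall
    (hF : ∀ k, ∀ t ∈ S, (F (k + 1) · t) - (F k · t) ∈ wBall γ (R / 2 ^ k))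
    (hFc : ∀ k, ContinuousOn (F k n) S) (hn : 1 ≤ n) :
    ContinuousOn (fun t => limUnder atTop (F · n t)) S := by
  refine TendstoUniformlyOn.continuousOn (F := fun k => F k n) (p := atTop) ?_
    (Eventually.of_forall hFc).frequently
  rw [Metric.tendstoUniformlyOn_iff]
  intro ε hε
  have hgeom : Tendsto (fun k => R / lam n ^ γ * (1 / 2) ^ k / (1 - 1 / 2)) atTop (𝓝 0) := by
    simpa using ((tendsto_pow_atTop_nhds_zero_of_lt_one (by norm_num : (0 : ℝ) ≤ 1 / 2)
      (by norm_num)).const_mul (R / lam n ^ γ)).div_const (1 - 1 / 2)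
  filter_upwards [hgeom.eventually_lt_const hε] with k hk t ht
  rw [dist_comm]
  exact (dist_le_of_le_geometric_of_tendsto _ _ (by norm_num) (dist_le_of_sub_mem_wBall hF hn ht)
    (tendsto_limUnder_of_sub_mem_wBall hF hn ht) k).trans_lt hk

end limit

def picardLimit (β ν : ℝ) (x : ℕ → ℝ) (n : ℕ) (t : ℝ) : ℝ :=
  limUnder atTop fun k => (picardMap β ν x)^[k] 0 n t

lemma picardMap_picardLimit {β ν γ R T : ℝ} {x : ℕ → ℝ} (hβ : 0 < β)
    (hball : ∀ k, ∀ t ∈ Icc 0 T, ((picardMap β ν x)^[k] 0 · t) ∈ wBall γ R)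
    (hdiff : ∀ k, ∀ t ∈ Icc 0 T,
      ((picardMap β ν x)^[k + 1] 0 · t) - ((picardMap β ν x)^[k] 0 · t) ∈ wBall γ (R / 2 ^ k))
    {n : ℕ} (hn : 1 ≤ n) {t : ℝ} (ht : t ∈ Icc 0 T) :
    picardMap β ν x (picardLimit β ν x) n t = picardLimit β ν x n t := by
  have hlim : ∀ m, 1 ≤ m → ∀ s ∈ Icc 0 T, Tendsto (fun k => (picardMap β ν x)^[k] 0 m s) atTop
      (𝓝 (picardLimit β ν x m s)) := fun m hm s hs => tendsto_limUnder_of_sub_mem_wBall hdiff hm hs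
  have hsub : ∀ {s}, s ∈ Icc 0 t → s ∈ Icc 0 T := fun hs => ⟨hs.1, hs.2.trans ht.2⟩
  have hnext : Tendsto (fun k => (picardMap β ν x)^[k + 1] 0 n t) atTop
      (𝓝 (picardMap β ν x (picardLimit β ν x) n t)) := by
    simp only [Function.iterate_succ_apply']
    exact tendsto_duhamel ht.1
      (fun k => (continuous_dyadicNonlin (continuous_picardMap_iterate k) n).continuousOn)
      (fun k s hs => abs_dyadicNonlin_le hβ (hball k s (hsub hs)) hn)
      (fun s hs => tendsto_dyadicNonlin hβ.ne' (fun m hm => hlim m hm s (hsub hs)) hn)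
  exact tendsto_nhds_unique hnext ((hlim n hn t ht).comp (tendsto_add_atTop_nat 1))

theorem exists_isMildSolution {β ν γ C : ℝ} {x : ℕ → ℝ} (hβ : 0 < β) (hν : 0 < ν)
    (hγ : β - γ < 2) (hx : x ∈ wBall γ C) :
    ∃ T > 0, ∃ X, IsMildSolution β ν x T X ∧ ∀ t ∈ Icc 0 T, (X · t) ∈ wBall γ (C + 1) := by
  have hC := nonneg_of_mem_wBall hx
  have hK : 0 < nonlinConst β γ := by unfold nonlinConst; positivity
  set R := C + 1
  have hR : 1 ≤ R := le_add_of_nonneg_left hC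
  obtain ⟨T, hT, hgain⟩ := exists_smoothingGainLE (η := 1 / (2 * nonlinConst β γ * R ^ 2)) hν hγ
    (by positivity)
  have hCR : C + nonlinConst β γ * R * R * (1 / (2 * nonlinConst β γ * R ^ 2)) ≤ R := by
    have : nonlinConst β γ * R * R * (1 / (2 * nonlinConst β γ * R ^ 2)) = 1 / 2 := by
      field_simp
    linarith
  have hη : nonlinConst β γ * R * (1 / (2 * nonlinConst β γ * R ^ 2)) ≤ 1 / 2 := by
    rw [show nonlinConst β γ * R * (1 / (2 * nonlinConst β γ * R ^ 2)) = 1 / 2 / R by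
      field_simp]
    exact div_le_self (by norm_num) hR
  have hball := picardMap_iterate_mem_wBall hβ hν hgain hx (by positivity) hCR
  have hdiff := picardMap_iterate_sub_mem_wBall hβ hν hgain hx (by positivity) hCR hη
  refine ⟨T, hT, picardLimit β ν x, ⟨fun n hn => ?_, fun n hn t ht => ?_⟩, fun t ht => ?_⟩
  · exact continuousOn_limUnder_of_sub_mem_wBall hdiff
      (fun k => (continuous_picardMap_iterate k n).continuousOn) hn
  · exact picardMap_picardLimit hβ hball hdiff hn ht
  · exact limUnder_mem_wBall hdiff (fun k => hball k t ht) ht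

lemma nonpos_of_forall_halving {P : ℝ → Prop} {a D₀ : ℝ} (h₀ : P D₀)
    (hhalf : ∀ D, P D → P (D / 2)) (ha : ∀ D, P D → a ≤ D) : a ≤ 0 := by
  have hP : ∀ k : ℕ, P (D₀ / 2 ^ k) := by
    intro k
    induction k with
    | zero => simpa using h₀
    | succ k ih => rw [pow_succ, ← div_div]; exact hhalf _ ih
  exact ge_of_tendsto'
    (tendsto_const_nhds.div_atTop (tendsto_pow_atTop_atTop_of_one_lt one_lt_two))
    fun k => ha _ (hP k)

lemma forall_of_forall_Ico_step {Q : ℝ → Prop} {δ : ℝ} (hδ : 0 < δ)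
    (hstep : ∀ t₀, 0 ≤ t₀ → (∀ s ∈ Ico 0 t₀, Q s) → ∀ s ∈ Ico 0 (t₀ + δ), Q s)
    {t : ℝ} (ht : 0 ≤ t) : Q t := by
  have hQ : ∀ j : ℕ, ∀ s ∈ Ico 0 (j * δ), Q s := by
    intro j
    induction j with
    | zero => simp
    | succ j ih => rw [Nat.cast_succ, add_one_mul]; exact hstep _ (by positivity) ih
  obtain ⟨j, hj⟩ := exists_nat_gt (t / δ)
  exact hQ j t ⟨ht, by rwa [div_lt_iff₀ hδ] at hj⟩

lemma IsMildSolution.sub_mem_wBall_half {β ν γ R D T δ η t₀ r : ℝ} {x : ℕ → ℝ}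
    {X Y : ℕ → ℝ → ℝ} (hβ : 0 < β) (hν : 0 < ν) (hgain : SmoothingGainLE ν (β - γ) δ η)
    (hη : nonlinConst β γ * R * η ≤ 1 / 2)
    (hX : IsMildSolution β ν x T X) (hY : IsMildSolution β ν x T Y)
    (hXR : ∀ t ∈ Icc 0 T, (X · t) ∈ wBall γ R) (hYR : ∀ t ∈ Icc 0 T, (Y · t) ∈ wBall γ R)
    (ht₀ : 0 ≤ t₀) (hr : r ∈ Icc t₀ (t₀ + δ)) (hrT : r ≤ T)
    (hpast : ∀ s ∈ Ioo 0 t₀, ∀ m, 1 ≤ m → X m s = Y m s)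
    (hD : ∀ s ∈ Icc t₀ r, (X · s) - (Y · s) ∈ wBall γ D) :
    (X · r) - (Y · r) ∈ wBall γ (D / 2) := by
  have hsub : ∀ {s}, s ∈ Icc 0 r → s ∈ Icc 0 T := fun hs => ⟨hs.1, hs.2.trans hrT⟩
  refine mem_wBall_of_eq (picardMap_sub_mem_wBall (x := x) hβ hν hgain ht₀ hr.1 hr.2
    (fun m hm => (hX.1 m hm).mono fun s hs => hsub hs)
    (fun m hm => (hY.1 m hm).mono fun s hs => hsub hs)
    (fun s hs => hXR s (hsub hs)) (fun s hs => hYR s (hsub hs)) hD hpast hη) fun m hm => ?_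
  have hr' : r ∈ Icc 0 T := hsub ⟨ht₀.trans hr.1, le_rfl⟩
  simp only [Pi.sub_apply]
  rw [hX.2 m hm hr', hY.2 m hm hr']

theorem IsMildSolution.eqOn {β ν γ R T : ℝ} {x : ℕ → ℝ} {X Y : ℕ → ℝ → ℝ}
    (hβ : 0 < β) (hν : 0 < ν) (hγ : β - γ < 2)
    (hX : IsMildSolution β ν x T X) (hY : IsMildSolution β ν x T Y)
    (hXR : ∀ t ∈ Icc 0 T, (X · t) ∈ wBall γ R) (hYR : ∀ t ∈ Icc 0 T, (Y · t) ∈ wBall γ R)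
    {n : ℕ} (hn : 1 ≤ n) : EqOn (X n) (Y n) (Icc 0 T) := by
  intro t ht
  have hR := nonneg_of_mem_wBall (hXR t ht)
  have hK : 0 < nonlinConst β γ := by unfold nonlinConst; positivity
  obtain ⟨δ, hδ, hgain⟩ :=
    exists_smoothingGainLE (η := 1 / (2 * nonlinConst β γ * (R + 1))) hν hγ (by positivity)
  have hη : nonlinConst β γ * R * (1 / (2 * nonlinConst β γ * (R + 1))) ≤ 1 / 2 := by
    rw [show nonlinConst β γ * R * (1 / (2 * nonlinConst β γ * (R + 1))) = R / (R + 1) / 2 by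
      field_simp]
    gcongr
    exact div_le_one_of_le₀ (by linarith) (by linarith)
  refine forall_of_forall_Ico_step (Q := fun s => s ∈ Icc 0 T → ∀ m, 1 ≤ m → X m s = Y m s) hδ
    (fun t₀ ht₀ hpast s hs hsT m hm => ?_) ht.1 ht n hn
  rcases lt_or_ge s t₀ with hst | hts
  · exact hpast s ⟨hs.1, hst⟩ hsT m hm
  have hsmall : lam m ^ γ * |X m s - Y m s| ≤ 0 := by
    refine nonpos_of_forall_halving (P := fun D => ∀ r ∈ Icc t₀ s, (X · r) - (Y · r) ∈ wBall γ D)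
      (fun r hr => sub_mem_wBall (hXR r ⟨ht₀.trans hr.1, hr.2.trans hsT.2⟩)
        (hYR r ⟨ht₀.trans hr.1, hr.2.trans hsT.2⟩))
      (fun D hD r hr => ?_) (fun D hD => hD s ⟨hts, le_rfl⟩ m hm)
    exact hX.sub_mem_wBall_half hβ hν hgain hη hY hXR hYR ht₀ ⟨hr.1, hr.2.trans hs.2.le⟩
      (hr.2.trans hsT.2)
      (fun q hq => hpast q ⟨hq.1.le, hq.2⟩ ⟨hq.1.le, (hq.2.le.trans hts).trans hsT.2⟩)
      fun q hq => hD q ⟨hq.1, hq.2.trans hr.2⟩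
  have hw := rpow_pos_of_pos (lam_pos hm) γ
  rw [← mul_zero (lam m ^ γ)] at hsmall
  exact sub_eq_zero.1 (abs_nonpos_iff.1 (le_of_mul_le_mul_left hsmall hw))

lemma viscous_rhs_eq (β ν : ℝ) (X : ℕ → ℝ → ℝ) (n : ℕ) (t : ℝ) :
    -ν * lam n ^ 2 * X n t + lam (n - 1) ^ β * (X (n - 1) t) ^ 2 - lam n ^ β * X n t * X (n + 1) t
      = -(ν * lam n ^ 2) * X n t + dyadicNonlin β (X · t) n := by
  unfold dyadicNonlin; ring

lemma IsMildSolution.isViscousSolution {β ν T : ℝ} {x : ℕ → ℝ} {X : ℕ → ℝ → ℝ} (hβ : 0 < β)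
    (hX : IsMildSolution β ν x T X) : IsViscousSolution β ν (Icc 0 T) X := by
  intro n hn t ht
  have hderiv := hasDerivWithinAt_duhamel (a := ν * lam n ^ 2) (c := x n)
    (continuousOn_dyadicNonlin hβ.ne' hX.1 hn) ht
  rw [viscous_rhs_eq, ← hX.2 n hn ht]
  exact hderiv.congr_of_mem (fun s hs => (hX.2 n hn hs).symm) ht

lemma IsViscousSolution.isMildSolution {β ν T : ℝ} {x : ℕ → ℝ} {X : ℕ → ℝ → ℝ} (hβ : 0 < β)
    (hX : IsViscousSolution β ν (Icc 0 T) X) (hx : ∀ n, 1 ≤ n → X n 0 = x n) :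
    IsMildSolution β ν x T X := by
  have hcont : ∀ n, 1 ≤ n → ContinuousOn (X n) (Icc 0 T) :=
    fun n hn t ht => (hX n hn t ht).continuousWithinAt
  refine ⟨hcont, fun n hn t ht => ?_⟩
  rw [picardMap, ← hx n hn]
  refine (eq_duhamel_of_hasDerivWithinAt (fun s hs => ?_)
    (continuousOn_dyadicNonlin hβ.ne' hcont hn) ht).symm
  rw [← viscous_rhs_eq]
  exact hX n hn s hs

lemma IsMildSolution.apply_zero {β ν T : ℝ} {x : ℕ → ℝ} {X : ℕ → ℝ → ℝ}
    (hX : IsMildSolution β ν x T X) (hT : 0 ≤ T) {n : ℕ} (hn : 1 ≤ n) : X n 0 = x n :=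
  (hX.2 n hn ⟨le_rfl, hT⟩).symm.trans duhamel_apply_zero

end

/-- local existence and uniqueness in the space
`𝒲_ε = {x : sup_{n≥1} λ_n^{β-2+ε} |x_n| < ∞}`. -/
theorem local_wellposedness_in_W
    (β ν ε : ℝ) (hβ : 0 < β) (hν : 0 < ν) (hε : 0 < ε)
    (x : ℕ → ℝ) (hx : ∃ C : ℝ, ∀ n, 1 ≤ n → lam n ^ (β - 2 + ε) * |x n| ≤ C) :
    ∃ T : ℝ, 0 < T ∧ ∃ X : ℕ → ℝ → ℝ,
      (IsViscousSolution β ν (Set.Icc 0 T) X ∧ (∀ n, 1 ≤ n → X n 0 = x n) ∧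
        ∃ C : ℝ, ∀ t ∈ Set.Icc (0 : ℝ) T, ∀ n, 1 ≤ n →
          lam n ^ (β - 2 + ε) * |X n t| ≤ C) ∧
      (∀ Y : ℕ → ℝ → ℝ, IsViscousSolution β ν (Set.Icc 0 T) Y →
        (∀ n, 1 ≤ n → Y n 0 = x n) →
        (∃ C : ℝ, ∀ t ∈ Set.Icc (0 : ℝ) T, ∀ n, 1 ≤ n →
          lam n ^ (β - 2 + ε) * |Y n t| ≤ C) →
        ∀ n, 1 ≤ n → ∀ t ∈ Set.Icc (0 : ℝ) T, Y n t = X n t) := by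
  obtain ⟨C, hC⟩ := hx
  have hγ : β - (β - 2 + ε) < 2 := by linarith
  obtain ⟨T, hT, X, hX, hXC⟩ := exists_isMildSolution hβ hν hγ (x := x) hC
  refine ⟨T, hT, X, ⟨hX.isViscousSolution hβ, fun n hn => hX.apply_zero hT.le hn, C + 1, hXC⟩, ?_⟩
  rintro Y hY hY₀ ⟨C', hYC'⟩ n hn t ht
  exact (hY.isMildSolution hβ hY₀).eqOn hβ hν hγ hX
    (fun s hs => wBall_mono (le_max_left C' (C + 1)) (hYC' s hs))
    (fun s hs => wBall_mono (le_max_right C' (C + 1)) (hXC s hs)) hn ht
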